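/- Fix positive integers t_c and, for each cell, a period p dividing t_c. Define, for a cell with period p active at times that are multiples of p, the quantity |x| of collected left-neighbor virtual states, updated at each activation by |x_new| = min(t_c, |x'| + q) where x' is the left neighbor's buffer (of a cell with period q dividing t_c) at its last activation before the current time. Then for every time t with 0 ≤ t < t_c and every j with 0 ≤ j ≤ t and j·p = t, after the cell's activation at time t one has |x| ≥ min(j·p, t_c). -/
import Mathlib


/-- Lemma 5.2 (fast collection): if a cell with period `p` updates its buffer
length at each activation time `t` (a multiple of `p`) to
`min(t_c, |x'| + q)`, where `x'` is the left neighbor's buffer at its last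
activation before `t` and `q` its period, then after the activation at time
`t = j·p < t_c` the buffer length is at least `min(j·p, t_c)`. -/
theorem fast_collect (t_c : ℕ) (htc : 0 < t_c)
    (per : ℤ → ℕ) (hper : ∀ i, 0 < per i ∧ per i ∣ t_c)
    (X : ℤ → ℕ → ℕ)
    (hupd : ∀ i t, 0 < t → per i ∣ t →
      X i t = min t_c (X (i - 1) (((t - 1) / per (i - 1)) * per (i - 1))
        + per (i - 1)))
    (hconst : ∀ i t, 0 < t → ¬ per i ∣ t → X i t = X i (t - 1)) :
    ∀ i : ℤ, ∀ t : ℕ, t < t_c → ∀ j : ℕ, j ≤ t → j * per i = t →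
      min (j * per i) t_c ≤ X i t := by
  intro i t
  induction t using Nat.strong_induction_on generalizing i with
  | _ t ih =>
    intro ht j hj hjp
    rcases Nat.eq_zero_or_pos t with h0 | hpos
    · subst h0
      interval_cases j
      simp
    · have hq := hper (i - 1)
      have hq0 : 0 < per (i - 1) := hq.1
      have hdvd : per i ∣ t := Dvd.intro_left j hjp
      rw [hupd i t hpos hdvd]
      set q := per (i - 1) with hqdef
      set t' := ((t - 1) / q) * q with ht'
      have ht'le : t' ≤ t - 1 := Nat.div_mul_le_self _ _
      have ht'lt : t' < t := by omega
      have hqdvd : q ∣ t' := ⟨(t - 1) / q, mul_comm _ _⟩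
      have hcancel : t' / q * q = t' := Nat.div_mul_cancel hqdvd
      have hIH : min (t' / q * q) t_c ≤ X (i - 1) t' := by
        apply ih t' ht'lt (i - 1) (by omega) (t' / q)
          (le_trans (Nat.div_le_self _ _) le_rfl) hcancel
      rw [hcancel] at hIH
      have h1 : t' ≤ X (i - 1) t' := le_trans (by omega) hIH
      have hm : t' = q * ((t - 1) / q) := by rw [ht', mul_comm]
      have h2 : t - 1 < t' + q := by
        have := Nat.div_add_mod (t - 1) q
        have := Nat.mod_lt (t - 1) hq0
        omega
      rw [hjp]
      omega
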